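/- The Q(K_{p,q})-coronal of the complete bipartite graph K_{p,q} equals ((p+q)x − (p−q)²)/(x² − (p+q)x), for all real x with x ∉ {0, p+q} (and xI − Q(K_{p,q}) invertible). -/

import Mathlib

open Matrix BigOperators

/-- The `M`-coronal `Γ_M(x) = 1ᵀ (xI - M)⁻¹ 1`, the sum of the entries of `(xI - M)⁻¹`. -/
noncomputable def coronal {n : Type*} [Fintype n] [DecidableEq n]
    (M : Matrix n n ℝ) (x : ℝ) : ℝ :=
  ∑ i, ∑ j, (x • (1 : Matrix n n ℝ) - M)⁻¹ i j

/-- The signless Laplacian `Q(G) = D(G) + A(G)` of a simple graph. -/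
def signlessLap {V : Type*} [Fintype V] [DecidableEq V]
    (G : SimpleGraph V) [DecidableRel G.Adj] : Matrix V V ℝ :=
  G.degMatrix ℝ + G.adjMatrix ℝ

instance {V W : Type*} [DecidableEq V] [DecidableEq W] :
    DecidableRel (completeBipartiteGraph V W).Adj := fun a b => by
  simp only [completeBipartiteGraph]
  infer_instance

/-! The signless Laplacian of `K_{p,q}` maps a vector that is constant on each side, `a` on the
`p`-side and `b` on the `q`-side, to `q(a + b)` resp. `p(a + b)`. So `(xI - Q) w = 1` is solved
by such a `w` with `xa - q(a + b) = 1 = xb - p(a + b)`, i.e. `a = (x - p + q)/(x² - (p+q)x)` and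
`b = (x + p - q)/(x² - (p+q)x)`, and the coronal is `1ᵀ w = pa + qb`. -/

theorem coronal_eq_sum_of_mulVec_eq_one {n : Type*} [Fintype n] [DecidableEq n]
    {M : Matrix n n ℝ} {x : ℝ} {w : n → ℝ} (hdet : IsUnit (x • (1 : Matrix n n ℝ) - M).det)
    (hw : (x • (1 : Matrix n n ℝ) - M) *ᵥ w = 1) :
    coronal M x = ∑ i, w i := by
  have hsolve : (x • (1 : Matrix n n ℝ) - M)⁻¹ *ᵥ 1 = w := by
    rw [← hw, mulVec_mulVec, nonsing_inv_mul _ hdet, one_mulVec]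
  simp only [coronal, ← hsolve, mulVec, dotProduct, Pi.one_apply, mul_one]

namespace SimpleGraph

variable {V W : Type*} [Fintype V] [Fintype W] [DecidableEq V] [DecidableEq W]

theorem neighborFinset_completeBipartiteGraph_inl (v : V) :
    (completeBipartiteGraph V W).neighborFinset (Sum.inl v) = Finset.univ.map .inr := by
  ext u; cases u <;> simp

theorem neighborFinset_completeBipartiteGraph_inr (w : W) :
    (completeBipartiteGraph V W).neighborFinset (Sum.inr w) = Finset.univ.map .inl := by
  ext u; cases u <;> simp

theorem signlessLap_completeBipartiteGraph_mulVec_elim (a b : ℝ) :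
    signlessLap (completeBipartiteGraph V W) *ᵥ Sum.elim (fun _ => a) (fun _ => b) =
      Sum.elim (fun _ => Fintype.card W * (a + b)) (fun _ => Fintype.card V * (a + b)) := by
  ext (v | w) <;>
    simp only [signlessLap, add_mulVec, Pi.add_apply, degMatrix_mulVec_apply,
      adjMatrix_mulVec_apply, degree, neighborFinset_completeBipartiteGraph_inl,
      neighborFinset_completeBipartiteGraph_inr, Finset.card_map, Finset.card_univ,
      Finset.sum_map, Function.Embedding.inl_apply, Function.Embedding.inr_apply,
      Sum.elim_inl, Sum.elim_inr, Finset.sum_const, nsmul_eq_mul] <;>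
    ring

end SimpleGraph

theorem coronal_signlessLap_completeBipartite_general (p q : ℕ) (x : ℝ)
    (hx0 : x ≠ 0) (hxpq : x ≠ (p : ℝ) + q)
    (hinv : IsUnit (x • (1 : Matrix (Fin p ⊕ Fin q) (Fin p ⊕ Fin q) ℝ)
      - signlessLap (completeBipartiteGraph (Fin p) (Fin q))).det) :
    coronal (signlessLap (completeBipartiteGraph (Fin p) (Fin q))) x =
      ((p + q : ℝ) * x - ((p : ℝ) - q) ^ 2) / (x ^ 2 - (p + q : ℝ) * x) := by
  have hd : x ^ 2 - (p + q : ℝ) * x ≠ 0 := by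
    rw [sq, ← sub_mul]
    exact mul_ne_zero (sub_ne_zero.mpr hxpq) hx0
  set a : ℝ := (x - p + q) / (x ^ 2 - (p + q : ℝ) * x)
  set b : ℝ := (x + p - q) / (x ^ 2 - (p + q : ℝ) * x)
  have hsolve : (x • (1 : Matrix (Fin p ⊕ Fin q) (Fin p ⊕ Fin q) ℝ)
      - signlessLap (completeBipartiteGraph (Fin p) (Fin q))) *ᵥ
        Sum.elim (fun _ => a) (fun _ => b) = 1 := by
    rw [sub_mulVec, smul_mulVec, one_mulVec,
      SimpleGraph.signlessLap_completeBipartiteGraph_mulVec_elim]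
    ext (i | j) <;> simp only [a, b, Pi.sub_apply, Pi.smul_apply, Sum.elim_inl, Sum.elim_inr,
      Fintype.card_fin, smul_eq_mul, Pi.one_apply] <;> field_simp <;> ring
  rw [coronal_eq_sum_of_mulVec_eq_one hinv hsolve, Fintype.sum_sum_type]
  simp only [Sum.elim_inl, Sum.elim_inr, Finset.sum_const, Finset.card_univ, Fintype.card_fin,
    nsmul_eq_mul, a, b]
  field_simp
  ring

/-- The signless Laplacian coronal of the complete bipartite graph `K_{p,q}` equals
`((p+q)x - (p-q)²)/(x² - (p+q)x)`. -/
theorem coronal_signlessLap_completeBipartite (p q : ℕ) (hp : 1 ≤ p) (hq : 1 ≤ q) (x : ℝ)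
    (hx0 : x ≠ 0) (hxpq : x ≠ (p : ℝ) + q)
    (hinv : IsUnit (x • (1 : Matrix (Fin p ⊕ Fin q) (Fin p ⊕ Fin q) ℝ)
      - signlessLap (completeBipartiteGraph (Fin p) (Fin q))).det) :
    coronal (signlessLap (completeBipartiteGraph (Fin p) (Fin q))) x =
      ((p + q : ℝ) * x - ((p : ℝ) - q) ^ 2) / (x ^ 2 - (p + q : ℝ) * x) :=
  coronal_signlessLap_completeBipartite_general p q x hx0 hxpq hinv
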